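/- arXiv:1703.06550 — 6 statements merged into one kernel-verified Lean document; each statement's English description precedes it below -/
import Mathlib

section
/- Let K ⊂ ℂ be a CM number field (a totally imaginary quadratic extension of a totally real field K⁺) with odd class number, and suppose every prime of K⁺ above 2 ramifies in K/K⁺. Let L ⊂ ℂ be a quadratic extension of K that is stable under complex conjugation and unramified at every finite prime of K not lying above 2. Then there exists a unit u of the ring of integers of K such that L = K(√u). -/
/-!
Complex conjugation `C` of `L` restricts to the complex conjugation of the CM field `K`, so for a
Kummer generator `β` of `L/K` we get `C β ∈ K β`, and a suitable `x β + C (x β)` is a generator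
fixed by `C`. Its square is then fixed by complex conjugation, hence lies in `K⁺`; clearing
denominators gives a generator `b ∈ 𝓞 L` with `b² = w ∈ 𝓞 K⁺`. Every prime of `K` divides `w` to an
even power: above `2` because it is ramified over `K⁺` and `w` comes from `K⁺`, away from `2`
because `w` becomes the square `b²` in `L`, which is unramified there. So `(w) = 𝔞²`; as the class
number is odd, `𝔞` is principal, i.e. `w = u g²` with `u` a unit, and `L = K(√u)`.
-/

open NumberField Module UniqueFactorizationMonoid

section QuadraticExtension

variable {K L : Type*} [Field K] [Field L] [Algebra K L]

theorem linearIndependent_one_of_notMem_range {α : L} (hα : α ∉ (algebraMap K L).range) :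
    LinearIndependent K ![1, α] := by
  refine LinearIndependent.pair_iff.mpr fun s t hst => ?_
  by_cases ht : t = 0
  · subst ht
    simpa [Algebra.smul_def] using hst
  · refine absurd ⟨-s / t, ?_⟩ hα
    rw [Algebra.smul_def, Algebra.smul_def, mul_one] at hst
    rw [map_div₀, map_neg, div_eq_iff ((map_ne_zero _).mpr ht)]
    linear_combination -hst

theorem exists_eq_add_mul_of_notMem_range (hKL : finrank K L = 2) {α : L}
    (hα : α ∉ (algebraMap K L).range) (y : L) :
    ∃ a b : K, algebraMap K L a + algebraMap K L b * α = y := by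
  have hspan := (linearIndependent_one_of_notMem_range hα).span_eq_top_of_card_eq_finrank
    (by simp [hKL])
  have hy : y ∈ Submodule.span K {1, α} := by
    rw [← Matrix.range_cons_cons_empty, hspan]
    exact Submodule.mem_top
  obtain ⟨a, b, hab⟩ := Submodule.mem_span_pair.mp hy
  exact ⟨a, b, by simpa [Algebra.smul_def] using hab⟩

theorem eq_zero_of_add_mul_eq_zero {α : L} (hα : α ∉ (algebraMap K L).range) {a b : K}
    (h : algebraMap K L a + algebraMap K L b * α = 0) : a = 0 ∧ b = 0 := by
  have hli := (LinearIndependent.pair_iff (R := K) (x := (1 : L)) (y := α)).mp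
    (linearIndependent_one_of_notMem_range hα)
  exact hli a b (by rwa [Algebra.smul_def, Algebra.smul_def, mul_one])

theorem exists_notMem_range_of_finrank_eq_two (hKL : finrank K L = 2) :
    ∃ α : L, α ∉ (algebraMap K L).range := by
  by_contra! h
  have : (⊥ : Subalgebra K L) = ⊤ := eq_top_iff.mpr fun y _ => h y
  rw [Subalgebra.bot_eq_top_iff_finrank_eq_one] at this
  omega

theorem adjoin_eq_top_of_notMem_range (hKL : finrank K L = 2) {α : L}
    (hα : α ∉ (algebraMap K L).range) : Algebra.adjoin K {α} = ⊤ := by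
  have := Subalgebra.isSimpleOrder_of_finrank_prime K L (hKL ▸ Nat.prime_two)
  refine (eq_bot_or_eq_top (Algebra.adjoin K {α})).resolve_left fun h => hα ?_
  exact Algebra.mem_bot.mp (h ▸ Algebra.self_mem_adjoin_singleton K α)

theorem exists_sq_mem_range_of_finrank_eq_two [NeZero (2 : K)] (hKL : finrank K L = 2) :
    ∃ β : L, β ∉ (algebraMap K L).range ∧ β ^ 2 ∈ (algebraMap K L).range := by
  obtain ⟨α, hα⟩ := exists_notMem_range_of_finrank_eq_two hKL
  obtain ⟨a, b, hab⟩ := exists_eq_add_mul_of_notMem_range hKL hα (α ^ 2)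
  have h2 : algebraMap K L (b / 2) * 2 = algebraMap K L b := by
    rw [← map_ofNat (algebraMap K L), ← map_mul, div_mul_cancel₀ _ two_ne_zero]
  refine ⟨α - algebraMap K L (b / 2), fun ⟨r, hr⟩ => hα ⟨r + b / 2, ?_⟩,
    ⟨a + (b / 2) ^ 2, ?_⟩⟩
  · rw [map_add, hr, sub_add_cancel]
  · rw [map_add, map_pow]
    linear_combination hab + α * h2

theorem exists_eq_mul_of_sq_mem_range [NeZero (2 : K)] (hKL : finrank K L = 2) {β γ : L}
    (hβ : β ∉ (algebraMap K L).range) (hβ2 : β ^ 2 ∈ (algebraMap K L).range)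
    (hγ : γ ∉ (algebraMap K L).range) (hγ2 : γ ^ 2 ∈ (algebraMap K L).range) :
    ∃ s : K, γ = algebraMap K L s * β := by
  obtain ⟨a, s, rfl⟩ := exists_eq_add_mul_of_notMem_range hKL hβ γ
  obtain ⟨δ, hδ⟩ := hβ2
  obtain ⟨ε, hε⟩ := hγ2
  have hcoeff : algebraMap K L (a ^ 2 + s ^ 2 * δ - ε) + algebraMap K L (2 * a * s) * β = 0 := by
    simp only [map_add, map_mul, map_sub, map_pow, map_ofNat]
    linear_combination algebraMap K L s ^ 2 * hδ - hε
  have has : a * s = 0 := by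
    simpa [mul_assoc, two_ne_zero] using (eq_zero_of_add_mul_eq_zero hβ hcoeff).2
  rcases mul_eq_zero.mp has with rfl | rfl
  · exact ⟨s, by rw [map_zero, zero_add]⟩
  · exact absurd ⟨a, by rw [map_zero, zero_mul, add_zero]⟩ hγ

theorem mul_notMem_range {β : L} (hβ : β ∉ (algebraMap K L).range) {t : K} (ht : t ≠ 0) :
    algebraMap K L t * β ∉ (algebraMap K L).range := by
  rintro ⟨r, hr⟩
  refine hβ ⟨r / t, ?_⟩
  rw [map_div₀, hr, mul_div_cancel_left₀ _ ((map_ne_zero _).mpr ht)]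

theorem exists_fixed_sq_mem_range_of_finrank_eq_two [NeZero (2 : K)] (hKL : finrank K L = 2)
    (C : L ≃+* L) (hCC : ∀ y, C (C y) = y) (c : K →+* K)
    (hC : ∀ x, C (algebraMap K L x) = algebraMap K L (c x)) (hc : ∃ x, c x ≠ x) :
    ∃ γ : L, γ ∉ (algebraMap K L).range ∧ γ ^ 2 ∈ (algebraMap K L).range ∧ C γ = γ := by
  obtain ⟨β, hβ, δ, hδ⟩ := exists_sq_mem_range_of_finrank_eq_two hKL
  have hCβ : C β ∉ (algebraMap K L).range := fun ⟨k, hk⟩ => hβ ⟨c k, by rw [← hC, hk, hCC]⟩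
  obtain ⟨s, hs⟩ := exists_eq_mul_of_sq_mem_range hKL hβ ⟨δ, hδ⟩ hCβ
    ⟨c δ, by rw [← hC, hδ, map_pow]⟩
  -- `x β + C (x β) = (x + c x * s) β` is fixed by `C`; its coefficient vanishes for all `x`
  -- only if `s = -1` (take `x = 1`) and `c = id`.
  have hcoeff : ∃ x, x + c x * s ≠ 0 := by
    by_contra! h
    have hs : s = -1 := eq_neg_of_add_eq_zero_right (by simpa using h 1)
    obtain ⟨x, hx⟩ := hc
    exact hx (sub_eq_zero.mp (by simpa [hs, ← sub_eq_add_neg] using h x)).symm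
  obtain ⟨x, hx⟩ := hcoeff
  have hγ : algebraMap K L x * β + C (algebraMap K L x * β) =
      algebraMap K L (x + c x * s) * β := by
    rw [map_mul, hC, hs, map_add, map_mul]
    ring
  refine ⟨_, hγ ▸ mul_notMem_range hβ hx, ?_, by rw [map_add, hCC, add_comm]⟩
  rw [hγ, mul_pow, ← hδ, ← map_pow, ← map_mul]
  exact RingHom.mem_range_self _ _

theorem exists_sq_eq_adjoin_eq_top_of_sq_eq_mul_sq (hKL : finrank K L = 2) {b : L}
    (hb : b ∉ (algebraMap K L).range) {u g : K} (hg : g ≠ 0)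
    (hbug : b ^ 2 = algebraMap K L (u * g ^ 2)) :
    ∃ β : L, β ^ 2 = algebraMap K L u ∧ Algebra.adjoin K {β} = ⊤ := by
  refine ⟨algebraMap K L g⁻¹ * b, ?_,
    adjoin_eq_top_of_notMem_range hKL (mul_notMem_range hb (inv_ne_zero hg))⟩
  rw [mul_pow, hbug, ← map_pow, ← map_mul, inv_pow, mul_comm u,
    inv_mul_cancel_left₀ (pow_ne_zero 2 hg)]

end QuadraticExtension

namespace NumberField.IsCMField

variable {K : Type*} [Field K] [NumberField K] [IsCMField K]

theorem exists_complexConj_ne : ∃ x : K, complexConj K x ≠ x := by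
  by_contra! h
  exact complexConj_ne_one K (AlgEquiv.ext h)

theorem exists_algebraMap_eq_of_complexConj_eq (F : Type*) [Field F] [IsTotallyReal F]
    [Algebra F K] [Algebra.IsQuadraticExtension F K] {x : K} (hx : complexConj K x = x) :
    ∃ y : F, algebraMap F K y = x :=
  ⟨(CMExtension.equivMaximalRealSubfield F K).symm ⟨x, (complexConj_eq_self_iff K x).mp hx⟩,
    CMExtension.algebraMap_equivMaximalRealSubfield_symm_apply F K _⟩

theorem apply_algebraMap_eq_algebraMap_complexConj {L : Type*} [Field L] [Algebra K L]
    [Algebra K ℂ] [Algebra L ℂ] [IsScalarTower K L ℂ] (C : L → L)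
    (hC : ∀ y, algebraMap L ℂ (C y) = starRingEnd ℂ (algebraMap L ℂ y)) (x : K) :
    C (algebraMap K L x) = algebraMap K L (complexConj K x) :=
  (algebraMap L ℂ).injective (by
    rw [hC, ← IsScalarTower.algebraMap_apply, ← IsScalarTower.algebraMap_apply,
      complexEmbedding_complexConj])

end NumberField.IsCMField

theorem ENat.natCast_dvd_natCast_iff {k n : ℕ} : (k : ℕ∞) ∣ n ↔ k ∣ n := by
  refine ⟨fun ⟨m, hm⟩ => ?_, Nat.cast_dvd_cast⟩
  rcases eq_or_ne k 0 with rfl | hk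
  · simp_all
  lift m to ℕ using fun h => by simp [h, hk] at hm
  exact ⟨m, by exact_mod_cast hm⟩

theorem Ideal.exists_eq_pow_of_dvd_emultiplicity {R : Type*} [CommRing R] [IsDedekindDomain R]
    {I : Ideal R} (hI : I ≠ ⊥) {k : ℕ} (h : ∀ P : Ideal R, Prime P → (k : ℕ∞) ∣ emultiplicity P I) :
    ∃ J : Ideal R, I = J ^ k := by
  classical
  obtain ⟨S, hS⟩ := Multiset.exists_smul_of_dvd_count (normalizedFactors I) fun P hP => by
    have hPprime := prime_of_normalized_factor P hP
    rw [← ENat.natCast_dvd_natCast_iff, ← normalize_eq P,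
      ← emultiplicity_eq_count_normalizedFactors hPprime.irreducible hI]
    exact h P hPprime
  exact ⟨S.prod, by rw [← Ideal.prod_normalizedFactors_eq_self hI, hS, Multiset.prod_nsmul]⟩

theorem exists_eq_unit_mul_pow_of_coprime {R : Type*} [CommRing R] [IsDedekindDomain R]
    [Fintype (ClassGroup R)] {k : ℕ} (hk : k.Coprime (Fintype.card (ClassGroup R))) {x : R}
    (hx : x ≠ 0) (h : ∀ P : Ideal R, Prime P → (k : ℕ∞) ∣ emultiplicity P (Ideal.span {x})) :
    ∃ (u : Rˣ) (g : R), x = u * g ^ k := by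
  obtain ⟨J, hJ⟩ := Ideal.exists_eq_pow_of_dvd_emultiplicity (by simpa using hx) h
  obtain ⟨g, rfl⟩ := (Ideal.IsPrincipal.of_isPrincipal_pow_of_coprime hk (hJ ▸ ⟨x, rfl⟩ :
    (J ^ k).IsPrincipal)).principal
  rw [Ideal.submodule_span_eq, Ideal.span_singleton_pow, Ideal.span_singleton_eq_span_singleton]
    at hJ
  obtain ⟨u, hu⟩ := hJ.symm
  exact ⟨u, g, by rw [← hu, mul_comm]⟩

theorem dvd_emultiplicity_of_map_eq_pow {R S : Type*} [CommRing R] [IsDedekindDomain R]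
    [CommRing S] [IsDedekindDomain S] [Algebra R S] [FaithfulSMul R S]
    {P : Ideal R} {Q : Ideal S} [Q.LiesOver P] (hP : Prime P) (hQ : Prime Q)
    (he : P.ramificationIdx' Q = 1) {I : Ideal R} (hI : I ≠ ⊥) {J : Ideal S} {k : ℕ}
    (hIJ : I.map (algebraMap R S) = J ^ k) : (k : ℕ∞) ∣ emultiplicity P I := by
  have := Ideal.IsDedekindDomain.emultiplicity_map_eq_ramificationIdx'_mul hI hP.irreducible
    hQ.irreducible hQ.ne_zero
  rw [he, Nat.cast_one, one_mul, hIJ, emultiplicity_pow hQ] at this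
  exact ⟨_, this.symm⟩

theorem two_dvd_emultiplicity_span {Kp K L : Type*} [Field Kp] [NumberField Kp] [Field K]
    [NumberField K] [Field L] [NumberField L] [Algebra Kp K] [Algebra K L]
    (hram2 : ∀ p : Ideal (𝓞 Kp), p.IsMaximal → (2 : 𝓞 Kp) ∈ p →
      ∀ P : Ideal (𝓞 K), P.IsMaximal → P.LiesOver p → Ideal.ramificationIdx' p P = 2)
    (hunramL : ∀ P : Ideal (𝓞 K), P.IsMaximal → (2 : 𝓞 K) ∉ P →
      ∀ Q : Ideal (𝓞 L), Q.IsMaximal → Q.LiesOver P → Ideal.ramificationIdx' P Q = 1)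
    {w : 𝓞 Kp} (hw : w ≠ 0) {b : 𝓞 L}
    (hb : algebraMap (𝓞 K) (𝓞 L) (algebraMap (𝓞 Kp) (𝓞 K) w) = b ^ 2)
    {P : Ideal (𝓞 K)} (hP : Prime P) :
    (2 : ℕ∞) ∣ emultiplicity P (Ideal.span {algebraMap (𝓞 Kp) (𝓞 K) w}) := by
  have : P.IsMaximal := (Ideal.isPrime_of_prime hP).isMaximal hP.ne_zero
  have hwK : algebraMap (𝓞 Kp) (𝓞 K) w ≠ 0 := by simpa using hw
  by_cases h2 : (2 : 𝓞 K) ∈ P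
  · have h2p : (2 : 𝓞 Kp) ∈ P.under (𝓞 Kp) := by
      rwa [Ideal.under_def, Ideal.mem_comap, map_ofNat]
    have hp0 : P.under (𝓞 Kp) ≠ ⊥ := fun h => two_ne_zero (Ideal.mem_bot.mp (h ▸ h2p))
    have he := hram2 _ inferInstance h2p P inferInstance ⟨rfl⟩
    rw [← Set.image_singleton, ← Ideal.map_span,
      Ideal.IsDedekindDomain.emultiplicity_map_eq_ramificationIdx'_mul (by simpa using hw)
        (Ideal.prime_of_isPrime hp0 inferInstance).irreducible hP.irreducible hP.ne_zero, he]
    exact dvd_mul_right _ _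
  · obtain ⟨Q, hQ, hQP⟩ := Ideal.exists_maximal_ideal_liesOver_of_isIntegral (S := 𝓞 L) P
    refine dvd_emultiplicity_of_map_eq_pow hP
      (Ideal.prime_of_isPrime (Ideal.ne_bot_of_liesOver_of_ne_bot hP.ne_zero Q) hQ.isPrime)
      (hunramL P inferInstance h2 Q hQ hQP) (by simpa using hwK) (J := Ideal.span {b}) ?_
    rw [Ideal.map_span, Set.image_singleton, hb, Ideal.span_singleton_pow]

theorem exists_integral_sq_eq_of_sq_eq {F K L : Type*} [Field F] [NumberField F] [Field K]
    [NumberField K] [Field L] [NumberField L] [Algebra F K] [Algebra K L] {γ : L}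
    (hγ : γ ∉ (algebraMap K L).range) {y : F} (hy : γ ^ 2 = algebraMap K L (algebraMap F K y)) :
    ∃ (w : 𝓞 F) (b : 𝓞 L), w ≠ 0 ∧ (b : L) ∉ (algebraMap K L).range ∧
      algebraMap (𝓞 K) (𝓞 L) (algebraMap (𝓞 F) (𝓞 K) w) = b ^ 2 := by
  obtain ⟨z, d, hd, rfl⟩ := IsFractionRing.div_surjective (A := 𝓞 F) y
  have hd0 : (d : F) ≠ 0 := by simpa using nonZeroDivisors.ne_zero hd
  have hz0 : z ≠ 0 := by
    rintro rfl
    refine hγ ⟨0, ?_⟩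
    rw [map_zero, eq_comm, ← pow_eq_zero_iff two_ne_zero, hy]
    simp
  set t : K := algebraMap F K d
  have hsq : (algebraMap K L t * γ) ^ 2 = algebraMap K L (algebraMap F K (z * d)) := by
    rw [mul_pow, hy, ← map_pow, ← map_mul, ← map_pow, ← map_mul]
    congr 2
    field_simp
  have hint : IsIntegral ℤ (algebraMap K L t * γ) := by
    refine IsIntegral.of_pow two_pos ?_
    rw [hsq]
    exact (algebraMap (𝓞 K) (𝓞 L) (algebraMap (𝓞 F) (𝓞 K) (z * d))).isIntegral_coe
  refine ⟨z * d, ⟨_, hint⟩, mul_ne_zero hz0 (nonZeroDivisors.ne_zero hd),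
    mul_notMem_range hγ ((map_ne_zero _).mpr hd0), ?_⟩
  exact RingOfIntegers.coe_injective hsq.symm

theorem quadratic_ext_of_CM_is_sqrt_of_unit_general
    (Kp K L : Type*) [Field Kp] [NumberField Kp] [Field K] [NumberField K]
    [Field L] [NumberField L]
    [Algebra Kp K] [Algebra K L]
    [Algebra K ℂ] [Algebra L ℂ]
    [IsScalarTower K L ℂ]
    (htotreal : ∀ v : NumberField.InfinitePlace Kp, v.IsReal)
    (htotim : ∀ v : NumberField.InfinitePlace K, v.IsComplex)
    (hquad : Module.finrank Kp K = 2)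
    (hodd : Odd (NumberField.classNumber K))
    (hram2 : ∀ p : Ideal (𝓞 Kp), p.IsMaximal → (2 : 𝓞 Kp) ∈ p →
      ∀ P : Ideal (𝓞 K), P.IsMaximal → P.LiesOver p →
        Ideal.ramificationIdx' p P = 2)
    (hquadL : Module.finrank K L = 2)
    (hLstable : ∃ c : L ≃+* L,
      ∀ x : L, algebraMap L ℂ (c x) = starRingEnd ℂ (algebraMap L ℂ x))
    (hunramL : ∀ P : Ideal (𝓞 K), P.IsMaximal → (2 : 𝓞 K) ∉ P →
      ∀ Q : Ideal (𝓞 L), Q.IsMaximal → Q.LiesOver P →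
        Ideal.ramificationIdx' P Q = 1) :
    ∃ (u : (𝓞 K)ˣ) (β : L),
      β ^ 2 = algebraMap K L (algebraMap (𝓞 K) K (u : 𝓞 K)) ∧
      Algebra.adjoin K {β} = ⊤ := by
  have : IsTotallyReal Kp := ⟨htotreal⟩
  have : IsTotallyComplex K := ⟨htotim⟩
  have : Algebra.IsQuadraticExtension Kp K := ⟨hquad⟩
  have : IsCMField K := .ofCMExtension Kp K
  obtain ⟨C, hC⟩ := hLstable
  have hCC : ∀ y, C (C y) = y := fun y =>
    (algebraMap L ℂ).injective (by rw [hC, hC, Complex.conj_conj])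
  have hCK := IsCMField.apply_algebraMap_eq_algebraMap_complexConj (K := K) C hC
  obtain ⟨γ, hγ, ⟨δ, hδ⟩, hCγ⟩ :=
    exists_fixed_sq_mem_range_of_finrank_eq_two hquadL C hCC (IsCMField.complexConj K) hCK
      IsCMField.exists_complexConj_ne
  obtain ⟨y, rfl⟩ := IsCMField.exists_algebraMap_eq_of_complexConj_eq Kp
    ((algebraMap K L).injective (by rw [← hCK, hδ, map_pow, hCγ]))
  obtain ⟨w, b, hw, hb, hwb⟩ := exists_integral_sq_eq_of_sq_eq hγ hδ.symm
  have hwK : algebraMap (𝓞 Kp) (𝓞 K) w ≠ 0 := by simpa using hw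
  obtain ⟨u, g, hug⟩ := exists_eq_unit_mul_pow_of_coprime (Nat.coprime_two_left.mpr hodd) hwK
    fun P hP => two_dvd_emultiplicity_span hram2 hunramL hw hwb hP
  have hg : g ≠ 0 := fun hg => hwK (by rw [hug, hg, zero_pow two_ne_zero, mul_zero])
  have hbug : (b : L) ^ 2 = algebraMap K L (algebraMap (𝓞 K) K (u * g ^ 2)) := by
    rw [← hug]
    exact congrArg (algebraMap (𝓞 L) L) hwb.symm
  obtain ⟨β, hβ⟩ := exists_sq_eq_adjoin_eq_top_of_sq_eq_mul_sq hquadL hb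
    (RingOfIntegers.coe_ne_zero_iff.mpr hg) (by rwa [map_mul, map_pow] at hbug)
  exact ⟨u, β, hβ⟩

/-- For a CM field `K` (totally imaginary quadratic extension of a totally real
field `K⁺`) with odd class number in which every prime of `K⁺` above `2` ramifies,
any quadratic extension `L/K` inside `ℂ` that is stable under complex conjugation
and unramified outside `2` is obtained by adjoining the square root of a unit. -/
theorem quadratic_ext_of_CM_is_sqrt_of_unit
    (Kp K L : Type*) [Field Kp] [NumberField Kp] [Field K] [NumberField K]
    [Field L] [NumberField L]
    [Algebra Kp K] [Algebra K L] [Algebra Kp L] [IsScalarTower Kp K L]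
    [Algebra Kp ℂ] [Algebra K ℂ] [Algebra L ℂ]
    [IsScalarTower Kp K ℂ] [IsScalarTower K L ℂ]
    (htotreal : ∀ v : NumberField.InfinitePlace Kp, v.IsReal)
    (htotim : ∀ v : NumberField.InfinitePlace K, v.IsComplex)
    (hquad : Module.finrank Kp K = 2)
    (hKstable : ∃ c : K ≃+* K,
      ∀ x : K, algebraMap K ℂ (c x) = starRingEnd ℂ (algebraMap K ℂ x))
    (hodd : Odd (NumberField.classNumber K))
    (hram2 : ∀ p : Ideal (𝓞 Kp), p.IsMaximal → (2 : 𝓞 Kp) ∈ p →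
      ∀ P : Ideal (𝓞 K), P.IsMaximal → P.LiesOver p →
        Ideal.ramificationIdx' p P = 2)
    (hquadL : Module.finrank K L = 2)
    (hLstable : ∃ c : L ≃+* L,
      ∀ x : L, algebraMap L ℂ (c x) = starRingEnd ℂ (algebraMap L ℂ x))
    (hunramL : ∀ P : Ideal (𝓞 K), P.IsMaximal → (2 : 𝓞 K) ∉ P →
      ∀ Q : Ideal (𝓞 L), Q.IsMaximal → Q.LiesOver P →
        Ideal.ramificationIdx' P Q = 1) :
    ∃ (u : (𝓞 K)ˣ) (β : L),
      β ^ 2 = algebraMap K L (algebraMap (𝓞 K) K (u : 𝓞 K)) ∧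
      Algebra.adjoin K {β} = ⊤ :=
  quadratic_ext_of_CM_is_sqrt_of_unit_general Kp K L htotreal htotim hquad hodd hram2 hquadL
    hLstable hunramL
end

section
/- Let p be a prime, Λ = ℤ_p[[T]], and let X be a finitely generated torsion Λ-module such that X/((1+T)² − 1)X is finite. Suppose σ : X → X is a ℤ_p-linear map with σ∘σ = id and σ((1+T)·x) = (1+T)^{−1}·σ(x) for all x ∈ X, where (1+T)^{−1} denotes the inverse of the unit 1+T of Λ. Then the ℚ_p-dimension of X ⊗_{ℤ_p} ℚ_p is even. -/
/-!
Put `g = u - u⁻¹`, so that `(1 + T)² - 1 = g u` and `σ (g x) = -g σ(x)`. Since `X / gX` is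
finite, multiplication by `g` becomes surjective on `V = ℚ_p ⊗ X`. On `V` the involution `σ`
splits `V` into its `±1`-eigenspaces, and the bijection `g` anticommuting with `σ` carries one
onto the other, so `dim V` is twice the dimension of the `+1`-eigenspace.
-/

open TensorProduct Function

namespace Module.End

open LinearMap (ker range)

variable {K V : Type*} [Field K] [AddCommGroup V] [Module K V] {S G : Module.End K V}

theorem range_sub_one_eq_ker_add_one (h2 : (2 : K) ≠ 0) (hS : S * S = 1) :
    range (S - 1) = ker (S + 1) := by
  have hSS (v : V) : S (S v) = v := congr($hS v)
  ext w
  constructor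
  · rintro ⟨v, rfl⟩
    simp [hSS]
  · intro hw
    have hSw : S w = -w := eq_neg_of_add_eq_zero_left hw
    refine ⟨-(2⁻¹ : K) • w, ?_⟩
    simp only [LinearMap.sub_apply, one_apply, map_smul, hSw]
    match_scalars
    field_simp
    ring

theorem map_ker_sub_one_eq_ker_add_one (hSG : S * G = -(G * S))
    (hG : Bijective G) : (ker (S - 1)).map G = ker (S + 1) := by
  have hSG' (v : V) : S (G v) = -G (S v) := congr($hSG v)
  ext w
  obtain ⟨v, rfl⟩ := hG.2 w
  simp only [Submodule.mem_map, LinearMap.mem_ker, LinearMap.sub_apply, LinearMap.add_apply,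
    one_apply, sub_eq_zero, hG.1.eq_iff, exists_eq_right, hSG', neg_add_eq_zero]

theorem even_finrank_of_anticommute (h2 : (2 : K) ≠ 0) (hS : S * S = 1)
    (hSG : S * G = -(G * S)) (hG : Surjective G) : Even (finrank K V) := by
  by_cases hfin : FiniteDimensional K V
  · have hGbij : Bijective G := ⟨LinearMap.injective_iff_surjective.mpr hG, hG⟩
    have hker : finrank K (ker (S + 1)) = finrank K (ker (S - 1)) := by
      rw [← map_ker_sub_one_eq_ker_add_one hSG hGbij]
      exact (Submodule.equivMapOfInjective G hGbij.1 _).finrank_eq.symm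
    have := LinearMap.finrank_range_add_finrank_ker (S - 1)
    rw [range_sub_one_eq_ker_add_one h2 hS, hker] at this
    exact ⟨_, this.symm⟩
  · simp [finrank_of_infinite_dimensional hfin]

end Module.End

theorem Submodule.exists_nsmul_mem_of_finite_quotient {R M : Type*} [Ring R] [AddCommGroup M]
    [Module R M] (N : Submodule R M) [Finite (M ⧸ N)] (x : M) : ∃ n ≠ 0, n • x ∈ N :=
  have : Finite (M ⧸ N.toAddSubgroup) := ‹Finite (M ⧸ N)›
  ⟨N.toAddSubgroup.index, AddSubgroup.index_ne_zero_of_finite,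
    N.toAddSubgroup.nsmul_index_mem x⟩

theorem LinearMap.baseChange_surjective_of_exists_nsmul_mem_range {R K M N : Type*}
    [CommRing R] [Field K] [CharZero K] [Algebra R K] [AddCommGroup M] [Module R M] [AddCommGroup N]
    [Module R N] (φ : M →ₗ[R] N) (h : ∀ y, ∃ n ≠ 0, n • y ∈ LinearMap.range φ) :
    Surjective (φ.baseChange K) := by
  intro v
  induction v using TensorProduct.induction_on with
  | zero => exact ⟨0, map_zero _⟩
  | tmul a y =>
    obtain ⟨n, hn, x, hx⟩ := h y
    refine ⟨((n : K)⁻¹ * a) ⊗ₜ x, ?_⟩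
    rw [baseChange_tmul, hx, tmul_smul, smul_tmul', nsmul_eq_mul, ← mul_assoc,
      mul_inv_cancel₀ (Nat.cast_ne_zero.mpr hn), one_mul]
  | add v w hv hw =>
    obtain ⟨v', rfl⟩ := hv
    obtain ⟨w', rfl⟩ := hw
    exact ⟨v' + w', map_add _ _ _⟩

section

variable {R Λ X : Type*} [Semiring R] [CommRing Λ] [AddCommGroup X] [Module R X] [Module Λ X]
  {σ : X →ₗ[R] X} {u : Λˣ}

theorem map_inv_smul_of_map_smul (hσu : ∀ x, σ ((u : Λ) • x) = (↑u⁻¹ : Λ) • σ x)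
    (x : X) : σ ((↑u⁻¹ : Λ) • x) = (u : Λ) • σ x := by
  calc σ ((↑u⁻¹ : Λ) • x)
      _ = (u : Λ) • (↑u⁻¹ : Λ) • σ ((↑u⁻¹ : Λ) • x) := by
        rw [smul_smul, Units.mul_inv, one_smul]
      _ = (u : Λ) • σ x := by rw [← hσu, smul_smul, Units.mul_inv, one_smul]

theorem map_sub_inv_smul_of_map_smul (hσu : ∀ x, σ ((u : Λ) • x) = (↑u⁻¹ : Λ) • σ x)
    (x : X) : σ (((u : Λ) - ↑u⁻¹) • x) = -(((u : Λ) - ↑u⁻¹) • σ x) := by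
  rw [sub_smul, map_sub, hσu, map_inv_smul_of_map_smul hσu, sub_smul, neg_sub]

end

open Pointwise in
theorem lambda_invariant_even_general (p : ℕ) [Fact p.Prime]
    (X : Type*) [AddCommGroup X] [Module (PowerSeries ℤ_[p]) X]
    [Module ℤ_[p] X] [IsScalarTower ℤ_[p] (PowerSeries ℤ_[p]) X]
    (hfin : Finite (X ⧸ (Ideal.span {((1 + PowerSeries.X) ^ 2 - 1 : PowerSeries ℤ_[p])} •
      (⊤ : Submodule (PowerSeries ℤ_[p]) X))))
    (σ : X →ₗ[ℤ_[p]] X)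
    (hσσ : ∀ x : X, σ (σ x) = x)
    (u : (PowerSeries ℤ_[p])ˣ) (hu : (u : PowerSeries ℤ_[p]) = 1 + PowerSeries.X)
    (hσT : ∀ x : X, σ ((1 + PowerSeries.X : PowerSeries ℤ_[p]) • x) =
      ((u⁻¹ : (PowerSeries ℤ_[p])ˣ) : PowerSeries ℤ_[p]) • σ x) :
    Even (Module.finrank ℚ_[p] (ℚ_[p] ⊗[ℤ_[p]] X)) := by
  set g : PowerSeries ℤ_[p] := u - ↑u⁻¹
  have hgu : ((1 + PowerSeries.X) ^ 2 - 1 : PowerSeries ℤ_[p]) = g * u := by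
    rw [sub_mul, Units.inv_mul, ← hu, sq]
  rw [hgu, Ideal.span_singleton_mul_right_unit u.isUnit,
    Submodule.ideal_span_singleton_smul] at hfin
  let G : Module.End ℤ_[p] X :=
    (LinearMap.lsmul (PowerSeries ℤ_[p]) X g).restrictScalars ℤ_[p]
  refine Module.End.even_finrank_of_anticommute (S := σ.baseChange ℚ_[p])
    (G := G.baseChange ℚ_[p]) two_ne_zero ?_ ?_ ?_
  · have hσ : σ * σ = 1 := LinearMap.ext hσσ
    rw [← LinearMap.baseChange_mul, hσ, LinearMap.baseChange_one]
  · have hσG : σ * G = -(G * σ) := LinearMap.ext (map_sub_inv_smul_of_map_smul (hu ▸ hσT))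
    rw [← LinearMap.baseChange_mul, hσG, LinearMap.baseChange_neg, LinearMap.baseChange_mul]
  · refine LinearMap.baseChange_surjective_of_exists_nsmul_mem_range G fun x => ?_
    obtain ⟨n, hn, hx⟩ := Submodule.exists_nsmul_mem_of_finite_quotient
      (g • (⊤ : Submodule (PowerSeries ℤ_[p]) X)) x
    obtain ⟨y, -, hy⟩ := (Submodule.mem_smul_pointwise_iff_exists _ _ _).mp hx
    exact ⟨n, hn, y, hy⟩

/-- If `X` is a finitely generated torsion `ℤ_p[[T]]`-module with
`X/((1+T)² - 1)X` finite, admitting a `ℤ_p`-linear involution `σ` with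
`σ((1+T)·x) = (1+T)⁻¹·σ(x)`, then `λ = dim_{ℚ_p}(X ⊗ ℚ_p)` is even. -/
theorem lambda_invariant_even (p : ℕ) [Fact p.Prime]
    (X : Type*) [AddCommGroup X] [Module (PowerSeries ℤ_[p]) X]
    [Module ℤ_[p] X] [IsScalarTower ℤ_[p] (PowerSeries ℤ_[p]) X]
    [Module.Finite (PowerSeries ℤ_[p]) X]
    (htors : Module.IsTorsion (PowerSeries ℤ_[p]) X)
    (hfin : Finite (X ⧸ (Ideal.span {((1 + PowerSeries.X) ^ 2 - 1 : PowerSeries ℤ_[p])} •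
      (⊤ : Submodule (PowerSeries ℤ_[p]) X))))
    (σ : X →ₗ[ℤ_[p]] X)
    (hσσ : ∀ x : X, σ (σ x) = x)
    (u : (PowerSeries ℤ_[p])ˣ) (hu : (u : PowerSeries ℤ_[p]) = 1 + PowerSeries.X)
    (hσT : ∀ x : X, σ ((1 + PowerSeries.X : PowerSeries ℤ_[p]) • x) =
      ((u⁻¹ : (PowerSeries ℤ_[p])ˣ) : PowerSeries ℤ_[p]) • σ x) :
    Even (Module.finrank ℚ_[p] (ℚ_[p] ⊗[ℤ_[p]] X)) :=
  lambda_invariant_even_general p X hfin σ hσσ u hu hσT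
end

section
/- Let p be a prime and let E = ⊕_j Λ/(f_j) be a finite direct sum of Λ-modules where each f_j is a distinguished polynomial, and set λ = Σ_j deg f_j. If λ ≥ 2, then the cardinality of E/ν₁E is at least p^m, where m = min(λ, p − 1). -/
/-!
Work modulo the ideal `(p, X ^ m)` of `Λ`. For `m ≤ deg f` it contains every distinguished `f`,
and for `m ≤ p - 1` it contains `ν₁`, whose coefficient of `X ^ i` is `p.choose (i + 1)`.
With `m_j = min (deg f_j) (p - 1)`, the quotient `E/ν₁E` therefore surjects onto
`∏ j, Λ/(p, X ^ m_j)`, which has `p ^ ∑ j, m_j` elements, and `∑ j, m_j ≥ min λ (p - 1)`.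
-/

open DirectSum

def IsDistinguished (p : ℕ) [Fact p.Prime] (f : Polynomial ℤ_[p]) : Prop :=
  f.Monic ∧ ∀ i < f.natDegree, (p : ℤ_[p]) ∣ f.coeff i

open PowerSeries

universe u

namespace PowerSeries

variable {A K : Type*} [CommRing A] [CommRing K]

/-- The kernel is the ideal `(ker φ, X ^ m)` of `A⟦X⟧`. -/
noncomputable def truncMod (φ : A →+* K) (m : ℕ) :
    A⟦X⟧ →+* K⟦X⟧ ⧸ Ideal.span {(X : K⟦X⟧) ^ m} :=
  (Ideal.Quotient.mk _).comp (map φ)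

theorem mem_ker_truncMod {φ : A →+* K} {m : ℕ} {g : A⟦X⟧} :
    g ∈ RingHom.ker (truncMod φ m) ↔ ∀ i < m, φ (coeff i g) = 0 := by
  simp [truncMod, RingHom.mem_ker, Ideal.Quotient.eq_zero_iff_mem, Ideal.mem_span_singleton,
    X_pow_dvd_iff]

theorem span_coe_le_ker_truncMod {φ : A →+* K} {m : ℕ} {f : Polynomial A}
    (hf : ∀ i < m, φ (f.coeff i) = 0) :
    Ideal.span {(f : A⟦X⟧)} ≤ RingHom.ker (truncMod φ m) := by
  rw [Ideal.span_singleton_le_iff_mem, mem_ker_truncMod]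
  simpa only [Polynomial.coeff_coe] using hf

noncomputable def embeddingQuotientKerTruncMod {φ : A →+* K} (hφ : Function.Surjective φ)
    (m : ℕ) :
    (Fin m → K) ↪ A⟦X⟧ ⧸ RingHom.ker (truncMod φ m) where
  toFun v := Ideal.Quotient.mk _ <|
    mk fun i ↦ if h : i < m then Function.surjInv hφ (v ⟨i, h⟩) else 0
  inj' v w hvw := by
    rw [Ideal.Quotient.eq, mem_ker_truncMod] at hvw
    funext i
    simpa [Function.surjInv_eq hφ, sub_eq_zero] using hvw i i.isLt

theorem coeff_geom_sum_one_add_X (R : Type*) [CommRing R] (n i : ℕ) :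
    coeff i (∑ k ∈ Finset.range n, (1 + X : R⟦X⟧) ^ k) = n.choose (i + 1) := by
  have hmul : (∑ k ∈ Finset.range n, (1 + X : R⟦X⟧) ^ k) * X = (1 + X) ^ n - 1 := by
    rw [← geom_sum_mul, add_sub_cancel_left]
  rw [← coeff_succ_mul_X, hmul, map_sub, coeff_one, if_neg i.succ_ne_zero, sub_zero,
    ← Polynomial.coeff_one_add_X_pow R n (i + 1)]
  simp [← Polynomial.coeff_coe]

theorem geom_sum_one_add_X_mem_ker_truncMod {p : ℕ} (hp : p.Prime) [CharP K p] (φ : A →+* K)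
    {m : ℕ} (hm : m ≤ p - 1) :
    ∑ k ∈ Finset.range p, (1 + X : A⟦X⟧) ^ k ∈ RingHom.ker (truncMod φ m) := by
  rw [mem_ker_truncMod]
  intro i hi
  rw [coeff_geom_sum_one_add_X, map_natCast, CharP.cast_eq_zero_iff K p]
  exact hp.dvd_choose_self i.succ_ne_zero (by omega)

end PowerSeries

theorem Finset.min_sum_le_sum_min {ι M : Type*} [AddCommMonoid M] [LinearOrder M]
    [IsOrderedAddMonoid M] [CanonicallyOrderedAdd M] (s : Finset ι) (d : ι → M) (c : M) :
    min (∑ j ∈ s, d j) c ≤ ∑ j ∈ s, min (d j) c := by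
  by_cases h : ∀ j ∈ s, d j ≤ c
  · rw [Finset.sum_congr rfl fun j hj ↦ min_eq_left (h j hj)]
    exact min_le_left _ _
  · push Not at h
    obtain ⟨j, hj, hcj⟩ := h
    calc min (∑ j ∈ s, d j) c ≤ c := min_le_right _ _
      _ = min (d j) c := (min_eq_right hcj.le).symm
      _ ≤ ∑ j ∈ s, min (d j) c :=
        Finset.single_le_sum (f := fun j ↦ min (d j) c) (fun _ _ ↦ zero_le) hj

theorem PadicInt.toZMod_eq_zero_iff_dvd {p : ℕ} [Fact p.Prime] {x : ℤ_[p]} :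
    PadicInt.toZMod x = 0 ↔ (p : ℤ_[p]) ∣ x := by
  rw [← RingHom.mem_ker, PadicInt.ker_toZMod, PadicInt.maximalIdeal_eq_span_p,
    Ideal.mem_span_singleton]

theorem Submodule.mk_le_mk_quotient_smul_top {R : Type*} {M N : Type u} [CommRing R]
    [AddCommGroup M] [Module R M] [AddCommGroup N] [Module R N] {I : Ideal R}
    (hI : I ≤ Module.annihilator R N) {ψ : M →ₗ[R] N} (hψ : Function.Surjective ψ) :
    Cardinal.mk N ≤ Cardinal.mk (M ⧸ I • (⊤ : Submodule R M)) := by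
  have hker : I • (⊤ : Submodule R M) ≤ LinearMap.ker ψ :=
    Submodule.smul_le.2 fun r hr x _ ↦ by
      rw [LinearMap.mem_ker, map_smul]
      exact Module.mem_annihilator.1 (hI hr) _
  refine Cardinal.mk_le_of_surjective (f := Submodule.liftQ (I • ⊤) ψ hker) fun n ↦ ?_
  obtain ⟨x, rfl⟩ := hψ n
  exact ⟨Submodule.Quotient.mk x, rfl⟩

theorem card_quotient_nu_one_ge_general (p : ℕ) [Fact p.Prime]
    (ι : Type*) [Fintype ι]
    (f : ι → Polynomial ℤ_[p]) (hf : ∀ j, IsDistinguished p (f j))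
    (lam : ℕ) (hlam : lam = ∑ j, (f j).natDegree) :
    (p : Cardinal) ^ (min lam (p - 1)) ≤
      Cardinal.mk
        (@HasQuotient.Quotient (⨁ j, (PowerSeries ℤ_[p] ⧸ Ideal.span {((f j : Polynomial ℤ_[p]) : PowerSeries ℤ_[p])})) _
          (@Submodule.hasQuotient (PowerSeries ℤ_[p]) (⨁ j, (PowerSeries ℤ_[p] ⧸ Ideal.span {((f j : Polynomial ℤ_[p]) : PowerSeries ℤ_[p])})) _ _ _)
          (Ideal.span {(∑ i ∈ Finset.range p, (1 + PowerSeries.X) ^ i : PowerSeries ℤ_[p])} •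
            (⊤ : Submodule (PowerSeries ℤ_[p])
              (⨁ j, (PowerSeries ℤ_[p] ⧸
                Ideal.span {((f j : Polynomial ℤ_[p]) : PowerSeries ℤ_[p])}))))) := by
  have hp := (Fact.out : p.Prime)
  set m : ι → ℕ := fun j ↦ min (f j).natDegree (p - 1)
  set J : ι → Ideal ℤ_[p]⟦X⟧ := fun j ↦ RingHom.ker (truncMod PadicInt.toZMod (m j))
  have hfJ (j : ι) : Ideal.span {((f j : Polynomial ℤ_[p]) : ℤ_[p]⟦X⟧)} ≤ J j :=
    span_coe_le_ker_truncMod fun i hi ↦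
      PadicInt.toZMod_eq_zero_iff_dvd.2 ((hf j).2 i (hi.trans_le (min_le_left _ _)))
  have hνJ : Ideal.span {∑ i ∈ Finset.range p, (1 + X : ℤ_[p]⟦X⟧) ^ i} ≤
      Module.annihilator ℤ_[p]⟦X⟧ (Π j, ℤ_[p]⟦X⟧ ⧸ J j) := by
    simp only [Module.annihilator_pi, Ideal.annihilator_quotient, le_iInf_iff,
      Ideal.span_singleton_le_iff_mem]
    exact fun j ↦ geom_sum_one_add_X_mem_ker_truncMod hp _ (min_le_right _ _)
  calc (p : Cardinal) ^ min lam (p - 1) ≤ (p : Cardinal) ^ ∑ j, m j := by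
        gcongr
        · exact_mod_cast hp.one_le
        · exact hlam ▸ Finset.min_sum_le_sum_min _ _ _
    _ = Cardinal.mk (Π j, Fin (m j) → ZMod p) := by
        classical simp [Cardinal.mk_fintype, Fintype.card_pi, Finset.prod_pow_eq_pow_sum]
    _ ≤ Cardinal.mk (Π j, ℤ_[p]⟦X⟧ ⧸ J j) :=
        (Function.Embedding.piCongrRight fun j ↦
          embeddingQuotientKerTruncMod (ZMod.ringHom_surjective PadicInt.toZMod) (m j)).cardinal_le
    _ ≤ _ := Submodule.mk_le_mk_quotient_smul_top hνJ
        (ψ := LinearMap.piMap (fun j ↦ Submodule.factor (hfJ j)) ∘ₗ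
          (linearEquivFunOnFintype ℤ_[p]⟦X⟧ ι _).toLinearMap)
        ((Function.Surjective.piMap fun j ↦ Submodule.factor_surjective (hfJ j)).comp
          (linearEquivFunOnFintype ℤ_[p]⟦X⟧ ι _).surjective)

/-- For an elementary `Λ = ℤ_p[[T]]`-module `E = ⊕ Λ/(f_j)` with each `f_j`
distinguished and `λ = Σ deg f_j ≥ 2`, the quotient `E/ν₁E` has cardinality at
least `p^min(λ, p-1)`, where `ν₁ = ((1+T)^p - 1)/T = Σ_{i<p} (1+T)^i`. -/
theorem card_quotient_nu_one_ge (p : ℕ) [Fact p.Prime]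
    (ι : Type*) [Fintype ι] [DecidableEq ι]
    (f : ι → Polynomial ℤ_[p]) (hf : ∀ j, IsDistinguished p (f j))
    (lam : ℕ) (hlam : lam = ∑ j, (f j).natDegree) (hlam2 : 2 ≤ lam) :
    (p : Cardinal) ^ (min lam (p - 1)) ≤
      Cardinal.mk
        (@HasQuotient.Quotient (⨁ j, (PowerSeries ℤ_[p] ⧸ Ideal.span {((f j : Polynomial ℤ_[p]) : PowerSeries ℤ_[p])})) _
          (@Submodule.hasQuotient (PowerSeries ℤ_[p]) (⨁ j, (PowerSeries ℤ_[p] ⧸ Ideal.span {((f j : Polynomial ℤ_[p]) : PowerSeries ℤ_[p])})) _ _ _)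
          (Ideal.span {(∑ i ∈ Finset.range p, (1 + PowerSeries.X) ^ i : PowerSeries ℤ_[p])} •
            (⊤ : Submodule (PowerSeries ℤ_[p])
              (⨁ j, (PowerSeries ℤ_[p] ⧸
                Ideal.span {((f j : Polynomial ℤ_[p]) : PowerSeries ℤ_[p])}))))) :=
  card_quotient_nu_one_ge_general p ι f hf lam hlam
end

section
/- Let Λ = ℤ₂[[T]], let f(T) = T² + aT + b with a, b ∈ 2ℤ₂, and let x, y ∈ ℤ₂ be such that bx² − axy + y² ≠ 0. Then the ideal (f(T), xT + y) of Λ has finite index 2^v in Λ, where v is the 2-adic valuation of bx² − axy + y². -/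
/-!
Since `f` is a distinguished polynomial, Weierstrass division identifies `Λ ⧸ (f)` with
`S = ℤ₂[T] ⧸ (f)`, which is free over `ℤ₂` with basis `1, T`; hence `Λ ⧸ (f, xT + y)` is
`S ⧸ (xT + y)`. By the Smith normal form, the index of a principal ideal `(s)` of `S` is
`2 ^ v₂(N s)`, and the norm of `xT + y` is the determinant `bx² - axy + y²` of multiplication
by `xT + y` on the basis `1, T`.
-/

open Polynomial

theorem Polynomial.isDistinguishedAt_X_pow_two_add_C_mul_X_add_C {R : Type*} [CommRing R]
    {I : Ideal R} {a b : R} (ha : a ∈ I) (hb : b ∈ I) :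
    (X ^ 2 + C a * X + C b).IsDistinguishedAt I where
  mem {n} hn := by
    have : n < 2 := hn.trans_le (by compute_degree)
    interval_cases n <;> simp [ha, hb]
  monic := by monicity!

open PowerSeries in
noncomputable def Polynomial.IsDistinguishedAt.quotientSpanPairEquiv {A : Type*} [CommRing A]
    {I : Ideal A} [IsAdicComplete I A] {f : A[X]} (hf : f.IsDistinguishedAt I) (g : A[X]) :
    (A⟦X⟧ ⧸ Ideal.span {(f : A⟦X⟧), (g : A⟦X⟧)}) ≃+*
      AdjoinRoot f ⧸ Ideal.span {AdjoinRoot.mk f g} :=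
  (Ideal.quotEquivOfEq (Ideal.span_insert _ _)).trans <|
    (DoubleQuot.quotQuotEquivQuotSup _ _).symm.trans <|
      Ideal.quotientEquiv _ _ hf.algEquivQuotient.symm.toRingEquiv <| by
        rw [Ideal.map_span, Ideal.map_span, Set.image_singleton, Set.image_singleton]
        congr 2
        exact (hf.algEquivQuotient.symm_apply_eq.2 rfl).symm

theorem AdjoinRoot.norm_mk_C_mul_X_add_C {R : Type*} [CommRing R] [Nontrivial R] (a b x y : R) :
    Algebra.norm R (mk (X ^ 2 + C a * X + C b) (C x * X + C y)) =
      b * x ^ 2 - a * x * y + y ^ 2 := by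
  set f : R[X] := X ^ 2 + C a * X + C b
  have hf : f.Monic := by unfold f; monicity!
  have hdeg : f.natDegree = 2 := by unfold f; compute_degree!
  let B : Module.Basis (Fin 2) R (AdjoinRoot f) := (powerBasis' hf).basis.reindex (finCongr hdeg)
  have hB : ∀ i : Fin 2, B i = root f ^ (i : ℕ) := fun i ↦ by
    rw [Module.Basis.reindex_apply, PowerBasis.basis_eq_pow]; rfl
  have hroot : root f ^ 2 + of f a * root f + of f b = 0 := by
    simpa only [f, map_add, map_mul, map_pow, mk_X, mk_C] using mk_self (f := f)
  set g := mk f (C x * X + C y)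
  have hg : g = of f x * root f + of f y := by simp [g]
  have hcol₀ : g * 1 = y • 1 + x • root f := by
    rw [hg, Algebra.smul_def, Algebra.smul_def, algebraMap_eq]
    ring
  have hcol₁ : g * root f = (-(b * x)) • 1 + (y - a * x) • root f := by
    simp only [hg, Algebra.smul_def, algebraMap_eq, map_neg, map_sub, map_mul]
    linear_combination (of f x) * hroot
  have hmat : Algebra.leftMulMatrix B g = !![y, -(b * x); x, y - a * x] := by
    rw [Algebra.leftMulMatrix_apply, ← LinearEquiv.eq_symm_apply, LinearMap.toMatrix_symm]
    refine B.ext fun k ↦ ?_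
    rw [Matrix.toLin_self]
    fin_cases k
    · simpa [Fin.sum_univ_two, hB] using hcol₀
    · simpa [Fin.sum_univ_two, hB] using hcol₁
  rw [Algebra.norm_eq_matrix_det B, hmat, Matrix.det_fin_two_of]
  ring

namespace PadicInt

variable {p : ℕ} [Fact p.Prime]

theorem valuation_eq_zero_of_isUnit {u : ℤ_[p]} (hu : IsUnit u) : u.valuation = 0 := by
  obtain ⟨v, hv⟩ := hu.exists_right_inv
  have := congrArg valuation hv
  rw [valuation_mul hu.ne_zero (right_ne_zero_of_mul_eq_one hv), valuation_one] at this
  omega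

theorem valuation_eq_of_associated {x y : ℤ_[p]} (h : Associated x y) :
    x.valuation = y.valuation := by
  obtain ⟨u, rfl⟩ := h
  rcases eq_or_ne x 0 with rfl | hx
  · simp
  rw [valuation_mul hx u.ne_zero, valuation_eq_zero_of_isUnit u.isUnit, add_zero]

theorem valuation_prod {ι : Type*} (s : Finset ι) {f : ι → ℤ_[p]} (hf : ∀ i ∈ s, f i ≠ 0) :
    (∏ i ∈ s, f i).valuation = ∑ i ∈ s, (f i).valuation := by
  classical
  induction s using Finset.induction_on with
  | empty => simp
  | insert i s hi ih =>
    rw [Finset.prod_insert hi, Finset.sum_insert hi,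
      valuation_mul (hf i (s.mem_insert_self i))
        (Finset.prod_ne_zero_iff.2 fun j hj ↦ hf j (Finset.mem_insert_of_mem hj)),
      ih fun j hj ↦ hf j (Finset.mem_insert_of_mem hj)]

theorem card_quotient_span_singleton {z : ℤ_[p]} (hz : z ≠ 0) :
    Nat.card (ℤ_[p] ⧸ Ideal.span {z}) = p ^ z.valuation := by
  have hspan : Ideal.span {z} = RingHom.ker (toZModPow (p := p) z.valuation) := by
    rw [ker_toZModPow, Ideal.span_singleton_eq_span_singleton]
    exact Associated.symm ⟨unitCoeff hz, by rw [mul_comm, ← unitCoeff_spec hz]⟩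
  rw [hspan, Nat.card_congr (RingHom.quotientKerEquivOfSurjective
    (ZMod.ringHom_surjective _)).toEquiv, Nat.card_zmod]

open Module Submodule in
theorem card_quotient_range_eq_pow_valuation_det {M : Type*} [AddCommGroup M] [Module ℤ_[p] M]
    [Module.Free ℤ_[p] M] [Module.Finite ℤ_[p] M] {φ : M →ₗ[ℤ_[p]] M} (hφ : φ.det ≠ 0) :
    Nat.card (M ⧸ LinearMap.range φ) = p ^ φ.det.valuation := by
  set N := LinearMap.range φ
  have hinj : Function.Injective φ :=
    LinearMap.ker_eq_bot.1 (not_not.1 (mt LinearMap.det_eq_zero_iff_ker_ne_bot.2 hφ))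
  let e : M ≃ₗ[ℤ_[p]] N := LinearEquiv.ofInjective φ hinj
  have hrank : finrank ℤ_[p] N = finrank ℤ_[p] M := e.finrank_eq.symm
  let b := Module.Free.chooseBasis ℤ_[p] M
  set a := smithNormalFormCoeffs b hrank
  let b' := smithNormalFormTopBasis b hrank
  let e' : M ≃ₗ[ℤ_[p]] N := b'.equiv (smithNormalFormBotBasis b hrank) (Equiv.refl _)
  have ha : ∀ i, a i ≠ 0 := smithNormalFormCoeffs_ne_zero b hrank
  have hdet : (N.subtype ∘ₗ (e' : M →ₗ[ℤ_[p]] N)).det = ∏ i, a i := by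
    classical
    rw [← LinearMap.det_toMatrix b', ← Matrix.det_diagonal]
    congr 1
    ext i j
    rw [LinearMap.toMatrix_apply]
    by_cases h : i = j <;> simp [e', b', a, h]
  have hassoc : Associated φ.det (∏ i, a i) :=
    hdet ▸ LinearMap.associated_det_comp_equiv N.subtype e e'
  rw [valuation_eq_of_associated hassoc, valuation_prod _ fun i _ ↦ ha i,
    ← Finset.prod_pow_eq_pow_sum, Nat.card_congr (quotientEquivPiSpan N b hrank).toEquiv,
    Nat.card_pi]
  exact Finset.prod_congr rfl fun i _ ↦ card_quotient_span_singleton (ha i)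

theorem card_quotient_span_singleton_eq_pow_valuation_norm {S : Type*} [CommRing S]
    [Algebra ℤ_[p] S] [Module.Free ℤ_[p] S] [Module.Finite ℤ_[p] S] {s : S}
    (hs : Algebra.norm ℤ_[p] s ≠ 0) :
    Nat.card (S ⧸ Ideal.span {s}) = p ^ (Algebra.norm ℤ_[p] s).valuation := by
  have hrange : (Ideal.span {s}).restrictScalars ℤ_[p] =
      LinearMap.range (Algebra.lmul ℤ_[p] S s) := by
    ext t
    simp [Ideal.mem_span_singleton', mul_comm]
  rw [← Nat.card_congr (Submodule.Quotient.restrictScalarsEquiv ℤ_[p] (Ideal.span {s})).toEquiv,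
    hrange]
  exact card_quotient_range_eq_pow_valuation_det hs

end PadicInt

/-- For `f(T) = T² + aT + b` with `a, b ∈ 2ℤ₂`, the ideal `(f(T), xT + y)` of
`Λ = ℤ₂[[T]]` has finite index `2^v` in `Λ`, where `v = v₂(bx² - axy + y²)`. -/
theorem index_quadratic_linear_ideal (a b x y : ℤ_[2])
    (ha : (2 : ℤ_[2]) ∣ a) (hb : (2 : ℤ_[2]) ∣ b)
    (hne : b * x ^ 2 - a * x * y + y ^ 2 ≠ 0) :
    Nat.card (PowerSeries ℤ_[2] ⧸
      (Ideal.span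
        {(PowerSeries.X ^ 2 + PowerSeries.C a * PowerSeries.X +
            PowerSeries.C b : PowerSeries ℤ_[2]),
         (PowerSeries.C x * PowerSeries.X +
            PowerSeries.C y : PowerSeries ℤ_[2])} : Ideal (PowerSeries ℤ_[2]))) =
    2 ^ (b * x ^ 2 - a * x * y + y ^ 2).valuation := by
  have hmem {z : ℤ_[2]} (hz : (2 : ℤ_[2]) ∣ z) : z ∈ IsLocalRing.maximalIdeal ℤ_[2] := by
    rw [PadicInt.maximalIdeal_eq_span_p, Ideal.mem_span_singleton]
    exact_mod_cast hz
  have hf := isDistinguishedAt_X_pow_two_add_C_mul_X_add_C (hmem ha) (hmem hb)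
  have hnorm := AdjoinRoot.norm_mk_C_mul_X_add_C a b x y
  have := Module.Free.of_basis (AdjoinRoot.powerBasis' hf.monic).basis
  have := Module.Finite.of_basis (AdjoinRoot.powerBasis' hf.monic).basis
  have hideal : Ideal.span {(PowerSeries.X ^ 2 + PowerSeries.C a * PowerSeries.X +
      PowerSeries.C b : PowerSeries ℤ_[2]), PowerSeries.C x * PowerSeries.X + PowerSeries.C y} =
      Ideal.span {((X ^ 2 + C a * X + C b : ℤ_[2][X]) : PowerSeries ℤ_[2]),
        ((C x * X + C y : ℤ_[2][X]) : PowerSeries ℤ_[2])} := by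
    simp
  rw [hideal, Nat.card_congr (hf.quotientSpanPairEquiv _).toEquiv,
    PadicInt.card_quotient_span_singleton_eq_pow_valuation_norm (hnorm ▸ hne), hnorm]
end

section
/- Let p be a prime, Λ = ℤ_p[[T]], and let E be an elementary Λ-module. Suppose there is an exact sequence of Λ-modules 0 → F₁ → Z → E → F₂ → 0 with F₁ and F₂ finite. Let f ∈ Λ be such that Z/fZ is finite. Then the cardinality of Z/fZ equals the cardinality of F₁/fF₁ times the cardinality of E/fE. -/
open DirectSum

/-!
Multiplication by `f` is injective on `E`. Indeed `E/fE` is finite, hence so is each `Λ/(g, f)`,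
so some power of `T` (if `g = p^k`) or of `p` (if `g` is monic) lies in `(g, f)`; as `p` is prime
in `Λ` and divides neither `T` nor a monic polynomial, that power is a nonzerodivisor modulo `g`,
and then so is `f`.

Put `Z' = β Z`. Reducing `0 → F₁ → Z → Z' → 0` modulo `f` stays exact since `f` is injective on
`Z' ⊆ E`, so `#(Z/fZ) = #(F₁/fF₁) · #(Z'/fZ')`. As `E/Z' ≅ F₂` is finite and `f` is injective on
`E`, the indices in `fZ' ⊆ Z' ⊆ E` and `fZ' ⊆ fE ⊆ E` give
`[Z' : fZ'] [E : Z'] = [fE : fZ'] [E : fE] = [E : Z'] [E : fE]`, i.e. `#(Z'/fZ') = #(E/fE)`.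
-/

open Function

section Exact

variable {R : Type*} [Ring R] {M N P : Type*} [AddCommGroup M] [Module R M]
  [AddCommGroup N] [Module R N] [AddCommGroup P] [Module R P] {i : M →ₗ[R] N} {q : N →ₗ[R] P}

theorem Function.Exact.natCard_eq_mul (hiq : Exact i q) (hi : Injective i) (hq : Surjective q) :
    Nat.card N = Nat.card M * Nat.card P := by
  rw [(LinearMap.range i).card_eq_card_quotient_mul_card,
    Nat.card_congr (LinearEquiv.ofInjective i hi).toEquiv,
    Nat.card_congr ((Submodule.quotEquivOfEq _ _ hiq.linearMap_ker_eq.symm).trans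
      (q.quotKerEquivOfSurjective hq)).toEquiv]

theorem Function.Exact.finite_quotient_range [Finite P] (hiq : Exact i q) (hq : Surjective q) :
    Finite (N ⧸ LinearMap.range i) := by
  rw [← hiq.linearMap_ker_eq]
  exact Finite.of_equiv _ (q.quotKerEquivOfSurjective hq).symm.toEquiv

end Exact

namespace QuotSMulTop

variable {R : Type*} [CommRing R] {M N P : Type*} [AddCommGroup M] [Module R M]
  [AddCommGroup N] [Module R N] [AddCommGroup P] [Module R P] (r : R)
  {i : M →ₗ[R] N} {q : N →ₗ[R] P}

theorem natCard_eq_mul_of_exact (hiq : Exact i q) (hi : Injective i) (hq : Surjective q)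
    (hr : IsSMulRegular P r) :
    Nat.card (QuotSMulTop r N) = Nat.card (QuotSMulTop r M) * Nat.card (QuotSMulTop r P) := by
  have hinj : Injective (map r i) := by
    have := map_first_exact_on_four_term_exact_of_isSMulRegular_last
      ((LinearMap.exact_zero_iff_injective M i).2 hi) hiq hr
    rwa [map_zero, LinearMap.exact_zero_iff_injective] at this
  exact (map_exact r hiq hq).natCard_eq_mul hinj (map_surjective r hq)

theorem finite_of_surjective [Finite (QuotSMulTop r M)] (hi : Surjective i) :
    Finite (QuotSMulTop r N) :=
  Finite.of_surjective _ (map_surjective r hi)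

end QuotSMulTop

section Index

open Pointwise

variable {R : Type*} [CommRing R] {M : Type*} [AddCommGroup M] [Module R M] (r : R)
  (L : Submodule R M)

theorem Submodule.index_smul_eq_natCard_quotSMulTop_mul :
    (r • L).toAddSubgroup.index = Nat.card (QuotSMulTop r L) * L.toAddSubgroup.index := by
  rw [← AddSubgroup.relIndex_mul_index (H := (r • L).toAddSubgroup) (K := L.toAddSubgroup)
    (smul_le_self_of_tower r L)]
  have h : (r • L).comap L.subtype = r • ⊤ := by
    rw [← Submodule.comap_map_eq_of_injective L.injective_subtype (r • ⊤),
      Submodule.map_pointwise_smul, L.map_subtype_top]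
  change Nat.card (L ⧸ (r • L).comap L.subtype) * _ = _
  rw [h]

theorem IsSMulRegular.index_smul_eq_mul_natCard_quotSMulTop (hr : IsSMulRegular M r) :
    (r • L).toAddSubgroup.index = L.toAddSubgroup.index * Nat.card (QuotSMulTop r M) := by
  rw [← AddSubgroup.relIndex_mul_index (H := (r • L).toAddSubgroup)
    (K := (r • ⊤ : Submodule R M).toAddSubgroup) (Submodule.map_mono le_top)]
  have := AddSubgroup.relIndex_map_map_of_injective L.toAddSubgroup ⊤
    (f := (DistribSMul.toLinearMap R M r).toAddMonoidHom) hr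
  rw [AddSubgroup.relIndex_top_right] at this
  rw [← this]
  rfl

theorem QuotSMulTop.finite_of_submodule [Finite (QuotSMulTop r L)] [Finite (M ⧸ L)] :
    Finite (QuotSMulTop r M) := by
  have : Finite (M ⧸ L.toAddSubgroup) := ‹_›
  have hL : (r • L).toAddSubgroup.index ≠ 0 := by
    rw [L.index_smul_eq_natCard_quotSMulTop_mul r]
    exact mul_ne_zero Nat.card_pos.ne' AddSubgroup.index_ne_zero_of_finite
  have : (r • ⊤ : Submodule R M).toAddSubgroup.FiniteIndex :=
    ⟨ne_zero_of_dvd_ne_zero hL (AddSubgroup.index_dvd_of_le (Submodule.map_mono le_top))⟩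
  exact AddSubgroup.finite_quotient_of_finiteIndex

theorem IsSMulRegular.natCard_quotSMulTop_submodule (hr : IsSMulRegular M r)
    [Finite (M ⧸ L)] : Nat.card (QuotSMulTop r L) = Nat.card (QuotSMulTop r M) := by
  have : Finite (M ⧸ L.toAddSubgroup) := ‹_›
  have hL := AddSubgroup.index_ne_zero_of_finite (H := L.toAddSubgroup)
  refine Nat.eq_of_mul_eq_mul_right (Nat.pos_of_ne_zero hL) ?_
  rw [← L.index_smul_eq_natCard_quotSMulTop_mul r, hr.index_smul_eq_mul_natCard_quotSMulTop,
    mul_comm]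

end Index

section DirectSum

variable {R : Type*} [CommRing R] {ι : Type*} {M : ι → Type*} [∀ i, AddCommGroup (M i)]
  [∀ i, Module R (M i)]

theorem IsSMulRegular.directSum {r : R} (h : ∀ i, IsSMulRegular (M i) r) :
    IsSMulRegular (DirectSum ι M) r :=
  (IsSMulRegular.pi h).of_injective (DirectSum.coeFnLinearMap R) DFunLike.coe_injective

theorem DirectSum.component_surjective (i : ι) : Surjective (DirectSum.component R ι M i) := by
  classical
  exact fun x => ⟨_, DirectSum.component.lof_self R i x⟩

end DirectSum

section PseudoIsomorphism

variable {R : Type*} [CommRing R] {F₁ Z E F₂ : Type*} [AddCommGroup F₁] [Module R F₁]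
  [AddCommGroup Z] [Module R Z] [AddCommGroup E] [Module R E] [AddCommGroup F₂] [Module R F₂]
  [Finite F₂] {α : F₁ →ₗ[R] Z} {β : Z →ₗ[R] E} {γ : E →ₗ[R] F₂} (r : R)

theorem QuotSMulTop.finite_of_exact [Finite (QuotSMulTop r Z)] (hβγ : Exact β γ)
    (hγ : Surjective γ) : Finite (QuotSMulTop r E) :=
  have := QuotSMulTop.finite_of_surjective r β.surjective_rangeRestrict
  have := hβγ.finite_quotient_range hγ
  QuotSMulTop.finite_of_submodule r (LinearMap.range β)

theorem IsSMulRegular.natCard_quotSMulTop_eq_mul_of_exact (hr : IsSMulRegular E r)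
    (hα : Injective α) (hαβ : Exact α β) (hβγ : Exact β γ) (hγ : Surjective γ) :
    Nat.card (QuotSMulTop r Z) = Nat.card (QuotSMulTop r F₁) * Nat.card (QuotSMulTop r E) := by
  have := hβγ.finite_quotient_range hγ
  have hαβ' : Exact α β.rangeRestrict := by
    rw [LinearMap.exact_iff, LinearMap.ker_rangeRestrict, hαβ.linearMap_ker_eq]
  rw [QuotSMulTop.natCard_eq_mul_of_exact r hαβ' hα β.surjective_rangeRestrict
    (hr.of_injective _ (LinearMap.range β).injective_subtype),
    hr.natCard_quotSMulTop_submodule (L := LinearMap.range β)]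

end PseudoIsomorphism

section Regular

open IsLocalRing Pointwise

variable {R : Type*} [CommRing R]

theorem IsLocalRing.exists_pow_smul_eq_zero [IsLocalRing R] {M : Type*} [AddCommGroup M]
    [Module R M] [Finite M] {t : R} (ht : t ∈ maximalIdeal R) (m : M) :
    ∃ n, t ^ n • m = 0 := by
  obtain ⟨a, b, hne, hab⟩ := Finite.exists_ne_map_eq_of_infinite (fun n : ℕ => t ^ n • m)
  wlog hlt : a < b generalizing a b
  · exact this b a hne.symm hab.symm (by omega)
  obtain ⟨k, rfl⟩ := Nat.exists_eq_add_of_lt hlt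
  have hu : IsUnit (1 - t ^ (k + 1)) :=
    isUnit_one_sub_self_of_mem_nonunits _ (Ideal.pow_mem_of_mem _ ht _ k.succ_pos)
  refine ⟨a, hu.smul_left_cancel.1 ?_⟩
  rw [smul_zero, sub_smul, one_smul, smul_smul, ← pow_add, sub_eq_zero]
  simpa [add_comm, add_assoc] using hab

theorem Ideal.exists_pow_mem_sup_span_singleton [IsLocalRing R] {I : Ideal R} {f t : R}
    [Finite (QuotSMulTop f (R ⧸ I))] (ht : t ∈ maximalIdeal R) :
    ∃ n, t ^ n ∈ I ⊔ Ideal.span {f} := by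
  have h : f • (⊤ : Submodule R (R ⧸ I)) = Submodule.map I.mkQ (Ideal.span {f}) := by
    rw [← Submodule.ideal_span_singleton_smul, ← Submodule.range_mkQ I, LinearMap.range_eq_map,
      ← Submodule.map_smul'', smul_eq_mul, Ideal.mul_top]
  have e : QuotSMulTop f (R ⧸ I) ≃ₗ[R] R ⧸ (I ⊔ Ideal.span {f}) :=
    (Submodule.quotEquivOfEq _ _ h).trans (Submodule.quotientQuotientEquivQuotientSup _ _)
  have := Finite.of_equiv _ e.toEquiv
  obtain ⟨n, hn⟩ := exists_pow_smul_eq_zero ht (1 : R ⧸ (I ⊔ Ideal.span {f}))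
  refine ⟨n, ?_⟩
  rwa [Algebra.smul_def, mul_one, Ideal.Quotient.algebraMap_eq,
    Ideal.Quotient.eq_zero_iff_mem] at hn

theorem isSMulRegular_quotient_of_mem_sup_span_singleton {I : Ideal R} {f s : R}
    (hs : s ∈ I ⊔ Ideal.span {f}) (hreg : IsSMulRegular (R ⧸ I) s) :
    IsSMulRegular (R ⧸ I) f := by
  rw [isSMulRegular_quotient_iff_mem_of_smul_mem] at hreg ⊢
  intro x hx
  obtain ⟨i, hi, y, hy, rfl⟩ := Submodule.mem_sup.1 hs
  obtain ⟨b, rfl⟩ := Ideal.mem_span_singleton'.1 hy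
  refine hreg x ?_
  rw [smul_eq_mul] at hx ⊢
  rw [add_mul, mul_assoc]
  exact I.add_mem (I.mul_mem_right _ hi) (I.mul_mem_left _ hx)

variable [IsDomain R] {π : R}

theorem Prime.isSMulRegular_quotient_span_pow (hπ : Prime π) {a : R} (ha : ¬π ∣ a) (k : ℕ) :
    IsSMulRegular (R ⧸ Ideal.span {π ^ k}) a := by
  rw [isSMulRegular_quotient_iff_mem_of_smul_mem]
  intro x hx
  rw [smul_eq_mul, Ideal.mem_span_singleton] at hx
  exact Ideal.mem_span_singleton.2 (hπ.pow_dvd_of_dvd_mul_left k ha hx)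

theorem Prime.isSMulRegular_pow_quotient_span (hπ : Prime π) {g : R} (hg : ¬π ∣ g) (n : ℕ) :
    IsSMulRegular (R ⧸ Ideal.span {g}) (π ^ n) := by
  rw [isSMulRegular_quotient_iff_mem_of_smul_mem]
  intro x hx
  rw [smul_eq_mul, Ideal.mem_span_singleton] at hx
  obtain ⟨y, hy⟩ := hx
  obtain ⟨z, rfl⟩ := hπ.pow_dvd_of_dvd_mul_left n hg (hy ▸ dvd_mul_right _ _)
  refine Ideal.mem_span_singleton.2 ⟨z, mul_left_cancel₀ (pow_ne_zero n hπ.ne_zero) ?_⟩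
  rw [hy]
  ring

end Regular

namespace PowerSeries

open IsLocalRing

variable {R : Type*} [CommRing R]

theorem C_dvd_iff {a : R} {F : R⟦X⟧} : C a ∣ F ↔ ∀ n, a ∣ coeff n F := by
  refine ⟨fun ⟨G, hG⟩ n => ⟨coeff n G, by rw [hG, coeff_C_mul]⟩, fun h => ?_⟩
  choose G hG using h
  exact ⟨mk G, ext fun n => by rw [coeff_C_mul, coeff_mk, hG]⟩

theorem _root_.Prime.powerSeries_C {π : R} (hπ : Prime π) : Prime (C π : R⟦X⟧) := by
  have := (Ideal.span_singleton_prime hπ.ne_zero).2 hπ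
  have hker : RingHom.ker (map (Ideal.Quotient.mk (Ideal.span {π}))) = Ideal.span {C π} := by
    ext F
    simp only [RingHom.mem_ker, Ideal.mem_span_singleton, C_dvd_iff, PowerSeries.ext_iff,
      coeff_map, map_zero, Ideal.Quotient.eq_zero_iff_mem]
  have hC : C π ≠ 0 := fun h => hπ.ne_zero (by simpa using congrArg constantCoeff h)
  rw [← Ideal.span_singleton_prime hC, ← hker]
  exact RingHom.ker_isPrime _

theorem mem_maximalIdeal_iff [IsLocalRing R] {F : R⟦X⟧} :
    F ∈ maximalIdeal (R⟦X⟧) ↔ constantCoeff F ∈ maximalIdeal R := by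
  simp only [mem_maximalIdeal, mem_nonunits_iff, isUnit_iff_constantCoeff]

end PowerSeries

section Iwasawa

open PowerSeries IsLocalRing

variable {p : ℕ} [Fact p.Prime]

theorem PadicInt.prime_natCast_powerSeries : Prime (p : ℤ_[p]⟦X⟧) := by
  rw [← map_natCast C]
  exact PadicInt.prime_p.powerSeries_C

theorem PadicInt.not_natCast_dvd_of_coeff_eq_one {F : ℤ_[p]⟦X⟧} {n : ℕ}
    (h : coeff n F = 1) : ¬(p : ℤ_[p]⟦X⟧) ∣ F := by
  rw [← map_natCast C, C_dvd_iff]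
  exact fun hd => PadicInt.p_nonunit (isUnit_of_dvd_one (h ▸ hd n))

variable {f : ℤ_[p]⟦X⟧}

theorem PadicInt.isSMulRegular_quotient_span_natCast_pow (k : ℕ)
    [Finite (QuotSMulTop f (ℤ_[p]⟦X⟧ ⧸ Ideal.span {(p : ℤ_[p]⟦X⟧) ^ k}))] :
    IsSMulRegular (ℤ_[p]⟦X⟧ ⧸ Ideal.span {(p : ℤ_[p]⟦X⟧) ^ k}) f := by
  obtain ⟨n, hn⟩ : ∃ n, X ^ n ∈ Ideal.span {(p : ℤ_[p]⟦X⟧) ^ k} ⊔ Ideal.span {f} :=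
    Ideal.exists_pow_mem_sup_span_singleton
      (mem_maximalIdeal_iff.2 (by rw [constantCoeff_X]; exact zero_mem _))
  refine isSMulRegular_quotient_of_mem_sup_span_singleton hn
    (prime_natCast_powerSeries.isSMulRegular_quotient_span_pow ?_ k)
  exact not_natCast_dvd_of_coeff_eq_one (coeff_X_pow_self n)

theorem Polynomial.Monic.isSMulRegular_quotient_span {P : Polynomial ℤ_[p]} (hP : P.Monic)
    [Finite (QuotSMulTop f (ℤ_[p]⟦X⟧ ⧸ Ideal.span {(P : ℤ_[p]⟦X⟧)}))] :
    IsSMulRegular (ℤ_[p]⟦X⟧ ⧸ Ideal.span {(P : ℤ_[p]⟦X⟧)}) f := by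
  obtain ⟨n, hn⟩ :
      ∃ n, (p : ℤ_[p]⟦X⟧) ^ n ∈ Ideal.span {(P : ℤ_[p]⟦X⟧)} ⊔ Ideal.span {f} :=
    Ideal.exists_pow_mem_sup_span_singleton
      (mem_maximalIdeal_iff.2 (by rw [map_natCast]; exact PadicInt.p_nonunit))
  refine isSMulRegular_quotient_of_mem_sup_span_singleton hn
    (PadicInt.prime_natCast_powerSeries.isSMulRegular_pow_quotient_span ?_ n)
  exact PadicInt.not_natCast_dvd_of_coeff_eq_one
    (by rw [Polynomial.coeff_coe, hP.coeff_natDegree])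

end Iwasawa

theorem card_quotient_eq_of_pseudo_isomorphism_general (p : ℕ) [Fact p.Prime]
    (ι : Type*)
    (g : ι → PowerSeries ℤ_[p])
    (hg : ∀ j, (∃ k : ℕ, 1 ≤ k ∧ g j = (p : PowerSeries ℤ_[p]) ^ k) ∨
      (∃ P : Polynomial ℤ_[p], P.Monic ∧ (∀ i < P.natDegree, (p : ℤ_[p]) ∣ P.coeff i) ∧
        g j = (P : PowerSeries ℤ_[p])))
    (Z F₁ F₂ : Type*)
    [AddCommGroup Z] [Module (PowerSeries ℤ_[p]) Z]
    [AddCommGroup F₁] [Module (PowerSeries ℤ_[p]) F₁]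
    [AddCommGroup F₂] [Module (PowerSeries ℤ_[p]) F₂] [Finite F₂]
    (α : F₁ →ₗ[PowerSeries ℤ_[p]] Z)
    (β : Z →ₗ[PowerSeries ℤ_[p]] (⨁ j, PowerSeries ℤ_[p] ⧸ Ideal.span {g j}))
    (γ : (⨁ j, PowerSeries ℤ_[p] ⧸ Ideal.span {g j}) →ₗ[PowerSeries ℤ_[p]] F₂)
    (hα : Function.Injective α) (hγ : Function.Surjective γ)
    (hαβ : LinearMap.range α = LinearMap.ker β)
    (hβγ : LinearMap.range β = LinearMap.ker γ)
    (f : PowerSeries ℤ_[p])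
    (hfin : Finite (Z ⧸ (Ideal.span {f} • (⊤ : Submodule (PowerSeries ℤ_[p]) Z)))) :
    Nat.card (Z ⧸ (Ideal.span {f} • (⊤ : Submodule (PowerSeries ℤ_[p]) Z))) =
      Nat.card (F₁ ⧸ (Ideal.span {f} • (⊤ : Submodule (PowerSeries ℤ_[p]) F₁))) *
      Nat.card (@HasQuotient.Quotient (⨁ j, PowerSeries ℤ_[p] ⧸ Ideal.span {g j}) _ Submodule.hasQuotient
        (Ideal.span {f} • (⊤ : Submodule (PowerSeries ℤ_[p])
          (⨁ j, PowerSeries ℤ_[p] ⧸ Ideal.span {g j})))) := by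
  simp only [Submodule.ideal_span_singleton_smul] at hfin ⊢
  have hαβ' := LinearMap.exact_iff.2 hαβ.symm
  have hβγ' := LinearMap.exact_iff.2 hβγ.symm
  have := QuotSMulTop.finite_of_exact (E := ⨁ j, PowerSeries ℤ_[p] ⧸ Ideal.span {g j}) f
    hβγ' hγ
  have hreg : IsSMulRegular (⨁ j, PowerSeries ℤ_[p] ⧸ Ideal.span {g j}) f := by
    refine IsSMulRegular.directSum (M := fun j => PowerSeries ℤ_[p] ⧸ Ideal.span {g j})
      fun j => ?_
    have := QuotSMulTop.finite_of_surjective f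
      (DirectSum.component_surjective (R := PowerSeries ℤ_[p])
        (M := fun j => PowerSeries ℤ_[p] ⧸ Ideal.span {g j}) j)
    rcases hg j with ⟨k, -, hk⟩ | ⟨P, hP, -, hP'⟩
    · rw [hk] at this ⊢
      exact PadicInt.isSMulRegular_quotient_span_natCast_pow k
    · rw [hP'] at this ⊢
      exact hP.isSMulRegular_quotient_span
  exact hreg.natCard_quotSMulTop_eq_mul_of_exact f hα hαβ' hβγ' hγ

/-- **Theorem on orders of quotients under pseudo-isomorphism.**
If `0 → F₁ → Z → E → F₂ → 0` is an exact sequence of `Λ = ℤ_p[[T]]`-modules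
with `F₁, F₂` finite and `E = ⊕ Λ/(g_j)` elementary (each `g_j` a power of `p`
or a distinguished polynomial), and `f ∈ Λ` is such that `Z/fZ` is finite, then
`#(Z/fZ) = #(F₁/fF₁) · #(E/fE)`. -/
theorem card_quotient_eq_of_pseudo_isomorphism (p : ℕ) [Fact p.Prime]
    (ι : Type*) [Fintype ι] [DecidableEq ι]
    (g : ι → PowerSeries ℤ_[p])
    (hg : ∀ j, (∃ k : ℕ, 1 ≤ k ∧ g j = (p : PowerSeries ℤ_[p]) ^ k) ∨
      (∃ P : Polynomial ℤ_[p], P.Monic ∧ (∀ i < P.natDegree, (p : ℤ_[p]) ∣ P.coeff i) ∧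
        g j = (P : PowerSeries ℤ_[p])))
    (Z F₁ F₂ : Type*)
    [AddCommGroup Z] [Module (PowerSeries ℤ_[p]) Z]
    [AddCommGroup F₁] [Module (PowerSeries ℤ_[p]) F₁] [Finite F₁]
    [AddCommGroup F₂] [Module (PowerSeries ℤ_[p]) F₂] [Finite F₂]
    (α : F₁ →ₗ[PowerSeries ℤ_[p]] Z)
    (β : Z →ₗ[PowerSeries ℤ_[p]] (⨁ j, PowerSeries ℤ_[p] ⧸ Ideal.span {g j}))
    (γ : (⨁ j, PowerSeries ℤ_[p] ⧸ Ideal.span {g j}) →ₗ[PowerSeries ℤ_[p]] F₂)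
    (hα : Function.Injective α) (hγ : Function.Surjective γ)
    (hαβ : LinearMap.range α = LinearMap.ker β)
    (hβγ : LinearMap.range β = LinearMap.ker γ)
    (f : PowerSeries ℤ_[p])
    (hfin : Finite (Z ⧸ (Ideal.span {f} • (⊤ : Submodule (PowerSeries ℤ_[p]) Z)))) :
    Nat.card (Z ⧸ (Ideal.span {f} • (⊤ : Submodule (PowerSeries ℤ_[p]) Z))) =
      Nat.card (F₁ ⧸ (Ideal.span {f} • (⊤ : Submodule (PowerSeries ℤ_[p]) F₁))) *
      Nat.card (@HasQuotient.Quotient (⨁ j, PowerSeries ℤ_[p] ⧸ Ideal.span {g j}) _ Submodule.hasQuotient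
        (Ideal.span {f} • (⊤ : Submodule (PowerSeries ℤ_[p])
          (⨁ j, PowerSeries ℤ_[p] ⧸ Ideal.span {g j})))) :=
  card_quotient_eq_of_pseudo_isomorphism_general p ι g hg Z F₁ F₂ α β γ hα hγ hαβ hβγ f hfin
end

section
/- Let p be a prime, Λ = ℤ_p[[T]], and let M be a finitely generated Λ-module. Then: (i) M/ν₁M = 0 if and only if M = 0; (ii) for every n ≥ 0, if M/ν_{n+1}M is finite then M/ν_nM is finite and #(M/ν_nM) ≤ #(M/ν_{n+1}M); and (iii) if for some n the quotients M/ν_nM and M/ν_{n+1}M are finite of equal order, then ν_nM = 0. -/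
/-- `ν_n = ((1+T)^(p^n) - 1)/T = Σ_{i < p^n} (1+T)^i` in `Λ = ℤ_p[[T]]`. -/
noncomputable def nuPS (p : ℕ) [Fact p.Prime] (n : ℕ) : PowerSeries ℤ_[p] :=
  ∑ i ∈ Finset.range (p ^ n), (1 + PowerSeries.X) ^ i

/-!
Since `ν_{n+1} = ν_n · φ_n` with `φ_n = Σ_{i < p} (1+T)^{p^n i}`, the module `ν_{n+1}M` lies in
`ν_nM`, which gives (ii). Every `φ_n` has constant term `p`, so it lies in the maximal ideal of
the local ring `Λ`. As `ν₁ = φ₀`, (i) is Nakayama's lemma, and in (iii) equal orders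
force `ν_nM = ν_{n+1}M = φ_n · ν_nM`, so `ν_nM = 0` by Nakayama's lemma again.
-/

namespace Submodule

section Quotient

variable {R M : Type*} [Ring R] [AddCommGroup M] [Module R M] {p q : Submodule R M}

theorem finite_quotient_of_le (hpq : p ≤ q) [Finite (M ⧸ p)] : Finite (M ⧸ q) :=
  Finite.of_surjective _ (factor_surjective hpq)

theorem card_quotient_le_of_le (hpq : p ≤ q) [Finite (M ⧸ p)] :
    Nat.card (M ⧸ q) ≤ Nat.card (M ⧸ p) :=
  Nat.card_le_card_of_surjective _ (factor_surjective hpq)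

theorem eq_of_le_of_card_quotient_eq (hpq : p ≤ q) [Finite (M ⧸ p)]
    (hcard : Nat.card (M ⧸ q) = Nat.card (M ⧸ p)) : p = q := by
  have hinj : Function.Injective (factor hpq) :=
    ((Nat.bijective_iff_surjective_and_card _).mpr ⟨factor_surjective hpq, hcard.symm⟩).injective
  refine le_antisymm hpq fun x hx => ?_
  rw [← Quotient.mk_eq_zero] at hx ⊢
  exact hinj (by rw [map_zero, ← mkQ_apply, factor_mk, mkQ_apply, hx])

end Quotient

variable {R M : Type*} [CommRing R] [AddCommGroup M] [Module R M]

theorem span_singleton_mul_smul (g φ : R) (N : Submodule R M) :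
    Ideal.span {g * φ} • N = Ideal.span {φ} • Ideal.span {g} • N := by
  rw [mul_comm, ← Ideal.span_singleton_mul_span_singleton, mul_smul]

theorem span_singleton_mul_smul_le (g φ : R) (N : Submodule R M) :
    Ideal.span {g * φ} • N ≤ Ideal.span {g} • N :=
  smul_mono_left (Ideal.span_singleton_le_span_singleton.mpr (dvd_mul_right g φ))

section IsLocalRing

variable [IsLocalRing R] {g : R}

theorem eq_bot_of_le_span_singleton_smul (hg : g ∈ IsLocalRing.maximalIdeal R)
    {N : Submodule R M} (hN : N.FG) (hle : N ≤ Ideal.span {g} • N) : N = ⊥ :=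
  eq_bot_of_le_smul_of_le_jacobson_bot _ N hN
    (hle.trans (smul_mono_left ((Ideal.span_singleton_le_iff_mem _).mpr hg)))
    (IsLocalRing.maximalIdeal_le_jacobson ⊥)

variable [Module.Finite R M]

theorem subsingleton_quotient_span_singleton_smul_top_iff (hg : g ∈ IsLocalRing.maximalIdeal R) :
    Subsingleton (M ⧸ Ideal.span {g} • (⊤ : Submodule R M)) ↔ Subsingleton M := by
  rw [Quotient.subsingleton_iff, ← Submodule.subsingleton_iff R, ← subsingleton_iff_bot_eq_top]
  constructor
  · intro htop
    exact (eq_bot_of_le_span_singleton_smul hg Module.Finite.fg_top htop.ge).symm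
  · intro hbot
    rw [← hbot, smul_bot]

theorem span_singleton_smul_top_eq_bot_of_card_quotient_eq {φ : R}
    (hφ : φ ∈ IsLocalRing.maximalIdeal R) [Finite (M ⧸ Ideal.span {g * φ} • (⊤ : Submodule R M))]
    (hcard : Nat.card (M ⧸ Ideal.span {g} • (⊤ : Submodule R M)) =
      Nat.card (M ⧸ Ideal.span {g * φ} • (⊤ : Submodule R M))) :
    Ideal.span {g} • (⊤ : Submodule R M) = ⊥ := by
  have heq : Ideal.span {g * φ} • (⊤ : Submodule R M) = Ideal.span {g} • ⊤ :=
    eq_of_le_of_card_quotient_eq (span_singleton_mul_smul_le g φ ⊤) hcard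
  refine eq_bot_of_le_span_singleton_smul hφ ?_ ?_
  · rw [smul_eq_map₂]
    exact (fg_span_singleton g).map₂ _ Module.Finite.fg_top
  · rw [← span_singleton_mul_smul, heq]

end IsLocalRing

end Submodule

section NuPS

variable (p : ℕ) [Fact p.Prime]

/-- `ν_{n+1} / ν_n`, the `p^{n+1}`-th cyclotomic polynomial evaluated at `1 + T`. -/
noncomputable def cyclotomicPS (n : ℕ) : PowerSeries ℤ_[p] :=
  ∑ i ∈ Finset.range p, ((1 + PowerSeries.X : PowerSeries ℤ_[p]) ^ (p ^ n)) ^ i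

theorem nuPS_succ (n : ℕ) : nuPS p (n + 1) = nuPS p n * cyclotomicPS p n := by
  have hX : ((1 + PowerSeries.X : PowerSeries ℤ_[p]) - 1) ≠ 0 := by
    simp [PowerSeries.X_ne_zero (R := ℤ_[p])]
  apply mul_right_cancel₀ hX
  rw [nuPS, nuPS, cyclotomicPS, geom_sum_mul, mul_right_comm, geom_sum_mul, mul_comm,
    geom_sum_mul, ← pow_mul, pow_succ]

theorem nuPS_one : nuPS p 1 = cyclotomicPS p 0 := by
  rw [nuPS_succ, nuPS, pow_zero, Finset.sum_range_one, pow_zero, one_mul]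

theorem constantCoeff_cyclotomicPS (n : ℕ) :
    PowerSeries.constantCoeff (cyclotomicPS p n) = p := by
  simp [cyclotomicPS]

theorem cyclotomicPS_mem_maximalIdeal (n : ℕ) :
    cyclotomicPS p n ∈ IsLocalRing.maximalIdeal (PowerSeries ℤ_[p]) := by
  rw [IsLocalRing.mem_maximalIdeal, mem_nonunits_iff, PowerSeries.isUnit_iff_constantCoeff,
    constantCoeff_cyclotomicPS]
  exact PadicInt.p_nonunit

end NuPS

/-- For a finitely generated `Λ = ℤ_p[[T]]`-module `M`:
(i) `M/ν₁M = 0` iff `M = 0`;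
(ii) if `M/ν_{n+1}M` is finite then `M/ν_nM` is finite with
`#(M/ν_nM) ≤ #(M/ν_{n+1}M)`;
(iii) if `M/ν_nM` and `M/ν_{n+1}M` are finite of equal order, then `ν_nM = 0`. -/
theorem nu_quotient_lemma (p : ℕ) [Fact p.Prime]
    (M : Type*) [AddCommGroup M] [Module (PowerSeries ℤ_[p]) M]
    [Module.Finite (PowerSeries ℤ_[p]) M] :
    (Subsingleton (M ⧸ (Ideal.span {nuPS p 1} • (⊤ : Submodule (PowerSeries ℤ_[p]) M))) ↔
      Subsingleton M) ∧
    (∀ n : ℕ,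
      Finite (M ⧸ (Ideal.span {nuPS p (n + 1)} • (⊤ : Submodule (PowerSeries ℤ_[p]) M))) →
      (Finite (M ⧸ (Ideal.span {nuPS p n} • (⊤ : Submodule (PowerSeries ℤ_[p]) M))) ∧
        Nat.card (M ⧸ (Ideal.span {nuPS p n} • (⊤ : Submodule (PowerSeries ℤ_[p]) M))) ≤
        Nat.card (M ⧸ (Ideal.span {nuPS p (n + 1)} • (⊤ : Submodule (PowerSeries ℤ_[p]) M))))) ∧
    (∀ n : ℕ,
      Finite (M ⧸ (Ideal.span {nuPS p n} • (⊤ : Submodule (PowerSeries ℤ_[p]) M))) →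
      Finite (M ⧸ (Ideal.span {nuPS p (n + 1)} • (⊤ : Submodule (PowerSeries ℤ_[p]) M))) →
      Nat.card (M ⧸ (Ideal.span {nuPS p n} • (⊤ : Submodule (PowerSeries ℤ_[p]) M))) =
        Nat.card (M ⧸ (Ideal.span {nuPS p (n + 1)} • (⊤ : Submodule (PowerSeries ℤ_[p]) M))) →
      (Ideal.span {nuPS p n} • (⊤ : Submodule (PowerSeries ℤ_[p]) M)) = ⊥) := by
  refine ⟨?_, fun n hfin => ?_, fun n _ hfin hcard => ?_⟩
  · rw [nuPS_one]
    exact Submodule.subsingleton_quotient_span_singleton_smul_top_iff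
      (cyclotomicPS_mem_maximalIdeal p 0)
  · rw [nuPS_succ] at hfin ⊢
    have hle := Submodule.span_singleton_mul_smul_le (nuPS p n) (cyclotomicPS p n) (⊤ : Submodule _ M)
    exact ⟨Submodule.finite_quotient_of_le hle, Submodule.card_quotient_le_of_le hle⟩
  · rw [nuPS_succ] at hfin hcard
    exact Submodule.span_singleton_smul_top_eq_bot_of_card_quotient_eq
      (cyclotomicPS_mem_maximalIdeal p n) hcard
end
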